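/- arXiv:2605.11506 — 4 statements merged into one kernel-verified Lean document; each statement's English description precedes it below -/
import Mathlib

section
/- (Start bound) Let Σ be a positive semidefinite n×n real matrix, σ > 0, and τ ∈ (0,1). Define Δ := Σ − Φ(Σ; σ) = Σ(Σ + σ²I)⁻¹Σ. If σ² ≥ ((1 − τ)/τ)·ν_max(Σ), where ν_max(Σ) is the largest eigenvalue of Σ, then Δ ⪯ τΣ. Conversely, if Δ ⪯ τΣ, then σ² ≥ ((1 − τ)/τ)·ν_max(Σ). -/
/-!
With `g x = τ * x - x * (x + σ²)⁻¹ * x`, the continuous functional calculus gives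
`τ • Σ - Σ * (Σ + σ² • 1)⁻¹ * Σ = g Σ`, which is positive semidefinite iff `g ≥ 0` on the
spectrum of `Σ`, i.e. on its eigenvalues. For `x ≥ 0` one has `g x ≥ 0 ↔ (1 - τ) / τ * x ≤ σ²`,
and this holds for every eigenvalue iff it holds for the largest one.
-/

open Matrix

theorem mul_sub_mul_inv_add_mul_nonneg_iff {x s τ : ℝ} (hx : 0 ≤ x) (hs : 0 ≤ s) (hτ : 0 < τ) :
    0 ≤ τ * x - x * (x + s)⁻¹ * x ↔ (1 - τ) / τ * x ≤ s := by
  rcases hx.eq_or_lt with rfl | hx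
  · simpa using hs
  have h : τ * x - x * (x + s)⁻¹ * x = x / (x + s) * (s * τ - (1 - τ) * x) := by
    field_simp
    ring
  rw [h, mul_nonneg_iff_of_pos_left (by positivity), sub_nonneg, div_mul_eq_mul_div,
    div_le_iff₀ hτ]

theorem Real.mul_iSup_le_iff {ι : Type*} [Finite ι] {f : ι → ℝ} {c s : ℝ} (hc : 0 ≤ c)
    (hs : 0 ≤ s) : c * ⨆ i, f i ≤ s ↔ ∀ i, c * f i ≤ s := by
  rw [Real.mul_iSup_of_nonneg hc]
  exact ⟨fun h i ↦ (le_ciSup (Set.finite_range _).bddAbove i).trans h, fun h ↦ Real.iSup_le h hs⟩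

theorem add_ne_zero_of_mem_spectrum_of_nonneg {A : Type*} [Ring A] [PartialOrder A] [Algebra ℝ A]
    [NonnegSpectrumClass ℝ A] {a : A} (ha : 0 ≤ a) {s : ℝ} (hs : 0 < s) {x : ℝ}
    (hx : x ∈ spectrum ℝ a) : x + s ≠ 0 :=
  (add_pos_of_nonneg_of_pos (spectrum_nonneg_of_nonneg ha hx) hs).ne'

section FunctionalCalculus

variable {A : Type*} [Ring A] [StarRing A] [Algebra ℝ A] [TopologicalSpace A] [PartialOrder A]
  [StarOrderedRing A] [ContinuousFunctionalCalculus ℝ A IsSelfAdjoint] [NonnegSpectrumClass ℝ A]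

theorem cfc_mul_sub_mul_inv_add_mul {a : A} (ha : 0 ≤ a) {s : ℝ} (hs : 0 < s) (τ : ℝ) :
    cfc (fun x ↦ τ * x - x * (x + s)⁻¹ * x) a =
      τ • a - a * Ring.inverse (a + algebraMap ℝ A s) * a := by
  have hne : ∀ x ∈ spectrum ℝ a, x + s ≠ 0 := fun _ ↦
    add_ne_zero_of_mem_spectrum_of_nonneg ha hs
  have ha' : IsSelfAdjoint a := .of_nonneg ha
  have hinv : cfc (fun x ↦ (x + s)⁻¹) a = Ring.inverse (a + algebraMap ℝ A s) := by
    rw [cfc_inv (· + s) a hne, cfc_add_const s (fun x ↦ x) a, cfc_id' ℝ a]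
  rw [cfc_sub (fun x ↦ τ * x) (fun x ↦ x * (x + s)⁻¹ * x) a
      (hg := by fun_prop (disch := assumption)),
    cfc_const_mul τ (fun x ↦ x) a,
    cfc_mul (fun x ↦ x * (x + s)⁻¹) (fun x ↦ x) a (by fun_prop (disch := assumption)),
    cfc_mul (fun x ↦ x) (fun x ↦ (x + s)⁻¹) a (hg := by fun_prop (disch := assumption)),
    hinv, cfc_id' ℝ a]

theorem smul_sub_mul_ringInverse_add_mul_nonneg_iff {a : A} (ha : 0 ≤ a) {s τ : ℝ} (hs : 0 < s)
    (hτ : 0 < τ) :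
    0 ≤ τ • a - a * Ring.inverse (a + algebraMap ℝ A s) * a ↔
      ∀ x ∈ spectrum ℝ a, (1 - τ) / τ * x ≤ s := by
  have hne : ∀ x ∈ spectrum ℝ a, x + s ≠ 0 := fun _ ↦
    add_ne_zero_of_mem_spectrum_of_nonneg ha hs
  rw [← cfc_mul_sub_mul_inv_add_mul ha hs,
    cfc_nonneg_iff _ a (by fun_prop (disch := assumption)) (.of_nonneg ha)]
  exact forall₂_congr fun x hx ↦
    mul_sub_mul_inv_add_mul_nonneg_iff (spectrum_nonneg_of_nonneg ha hx) hs.le hτ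

end FunctionalCalculus

open scoped MatrixOrder

theorem stmt_3_general {n : ℕ} (S : Matrix (Fin n) (Fin n) ℝ) (hS : S.PosSemidef)
    (σ τ : ℝ) (hσ : 0 < σ) (hτ : τ ∈ Set.Ioo (0 : ℝ) 1) :
    (σ ^ 2 ≥ (1 - τ) / τ * (⨆ i, hS.1.eigenvalues i) →
      (τ • S - S * (S + (σ ^ 2) • (1 : Matrix (Fin n) (Fin n) ℝ))⁻¹ * S).PosSemidef) ∧
    ((τ • S - S * (S + (σ ^ 2) • (1 : Matrix (Fin n) (Fin n) ℝ))⁻¹ * S).PosSemidef →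
      σ ^ 2 ≥ (1 - τ) / τ * (⨆ i, hS.1.eigenvalues i)) := by
  have key := smul_sub_mul_ringInverse_add_mul_nonneg_iff hS.nonneg (pow_pos hσ 2) hτ.1
  rw [Algebra.algebraMap_eq_smul_one, ← nonsing_inv_eq_ringInverse, nonneg_iff_posSemidef,
    hS.1.spectrum_real_eq_range_eigenvalues, Set.forall_mem_range,
    ← Real.mul_iSup_le_iff (div_nonneg (sub_nonneg.2 hτ.2.le) hτ.1.le) (by positivity)] at key
  exact ⟨key.2, key.1⟩

/-- Start bound: For PSD `S`, `σ > 0`, `τ ∈ (0,1)` and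
`Δ := S (S + σ²I)⁻¹ S`, we have `Δ ⪯ τS` iff `σ² ≥ ((1-τ)/τ)·ν_max(S)`,
where `ν_max(S)` is the largest eigenvalue of `S`. -/
theorem stmt_3 {n : ℕ} (hn : 0 < n) (S : Matrix (Fin n) (Fin n) ℝ) (hS : S.PosSemidef)
    (σ τ : ℝ) (hσ : 0 < σ) (hτ : τ ∈ Set.Ioo (0 : ℝ) 1) :
    (σ ^ 2 ≥ (1 - τ) / τ * (⨆ i, hS.1.eigenvalues i) →
      (τ • S - S * (S + (σ ^ 2) • (1 : Matrix (Fin n) (Fin n) ℝ))⁻¹ * S).PosSemidef) ∧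
    ((τ • S - S * (S + (σ ^ 2) • (1 : Matrix (Fin n) (Fin n) ℝ))⁻¹ * S).PosSemidef →
      σ ^ 2 ≥ (1 - τ) / τ * (⨆ i, hS.1.eigenvalues i)) :=
  stmt_3_general S hS σ τ hσ hτ
end

section
/- (Stop bound, matrix form for diagonal covariance) Let Σ_s = diag(ν₁,…,ν_n) with all ν_i ≥ 0, let σ_s > 0, τ ∈ (0,1), σ_t ≥ 0, and define Σ₀ := Φ(Σ_s; σ_s) and Δ := Φ(Σ_s; √(σ_s² + σ_t²)) − Σ₀, where Φ(Σ; σ) := Σ − Σ(Σ + σ²I)⁻¹Σ. Suppose ν_max := max_i ν_i > τσ_s². If σ_t² ≤ τσ_s²(ν_max + σ_s²)/(ν_max − τσ_s²), then Δ ⪯ τΣ₀. -/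
open Matrix

/-!
All matrices involved are diagonal, and `Φ(diag ν; s) = diag (νᵢ s² / (νᵢ + s²))`. With
`a = σs²`, `t = σt²`, the `i`-th entry of `τΣ₀ − Δ` is
`νᵢ (τa(νᵢ + a) − t(νᵢ − τa)) / ((νᵢ + a)(νᵢ + a + t))`. The bracket is affine in `νᵢ`,
nonnegative at `νᵢ = 0`, and nonnegative at `νᵢ = ν_max` by the bound on `σt²`; hence it is
nonnegative on all of `[0, ν_max]`.
-/

theorem Matrix.diagonal_sub_mul_inv_add_smul_one_mul {ι K : Type*} [Fintype ι] [DecidableEq ι]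
    [Field K] (d : ι → K) (c : K) (hc : ∀ i, d i + c ≠ 0) :
    diagonal d - diagonal d * (diagonal d + c • (1 : Matrix ι ι K))⁻¹ * diagonal d =
      diagonal fun i => d i * c / (d i + c) := by
  have hinv : (diagonal d + c • (1 : Matrix ι ι K))⁻¹ = diagonal fun i => (d i + c)⁻¹ := by
    refine inv_eq_left_inv ?_
    rw [smul_one_eq_diagonal, diagonal_add, diagonal_mul_diagonal]
    simp [inv_mul_cancel₀ (hc _)]
  rw [hinv, diagonal_mul_diagonal, diagonal_mul_diagonal, diagonal_sub]
  congr 1; ext i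
  field_simp [hc i]
  ring

theorem stop_bracket_nonneg {a t τ m x : ℝ} (ha : 0 ≤ a) (ht : 0 ≤ t) (hτ : 0 ≤ τ)
    (hx : 0 ≤ x) (hxm : x ≤ m) (hm : t * (m - τ * a) ≤ τ * a * (m + a)) :
    0 ≤ τ * a * (x + a) - t * (x - τ * a) := by
  rcases le_total t (τ * a) with h | h
  · nlinarith [mul_nonneg ht (mul_nonneg hτ ha)]
  · nlinarith

theorem tau_mul_sub_shrink_nonneg {a t τ m x : ℝ} (ha : 0 < a) (ht : 0 ≤ t) (hτ : 0 ≤ τ)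
    (hx : 0 ≤ x) (hxm : x ≤ m) (hm : t * (m - τ * a) ≤ τ * a * (m + a)) :
    0 ≤ τ * (x * a / (x + a)) - (x * (a + t) / (x + (a + t)) - x * a / (x + a)) := by
  have key : τ * (x * a / (x + a)) - (x * (a + t) / (x + (a + t)) - x * a / (x + a)) =
      x * (τ * a * (x + a) - t * (x - τ * a)) / ((x + a) * (x + (a + t))) := by
    field_simp
    ring
  rw [key]
  have := stop_bracket_nonneg ha.le ht hτ hx hxm hm
  positivity

theorem stmt_8_general {n : ℕ} (hn : 0 < n) (ν : Fin n → ℝ) (hν : ∀ i, 0 ≤ ν i)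
    (σs τ σt : ℝ) (hσs : 0 < σs) (hτ : τ ∈ Set.Ioo (0 : ℝ) 1)
    (Φ : Matrix (Fin n) (Fin n) ℝ → ℝ → Matrix (Fin n) (Fin n) ℝ)
    (hΦ : ∀ S s, Φ S s = S - S * (S + (s ^ 2) • (1 : Matrix (Fin n) (Fin n) ℝ))⁻¹ * S)
    (νmax : ℝ) (hνmax : νmax = Finset.univ.sup' (Finset.univ_nonempty_iff.mpr ⟨⟨0, hn⟩⟩) ν)
    (hgt : νmax > τ * σs ^ 2)
    (hbound : σt ^ 2 ≤ τ * σs ^ 2 * (νmax + σs ^ 2) / (νmax - τ * σs ^ 2)) :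
    (τ • Φ (Matrix.diagonal ν) σs -
      (Φ (Matrix.diagonal ν) (Real.sqrt (σs ^ 2 + σt ^ 2)) -
        Φ (Matrix.diagonal ν) σs)).PosSemidef := by
  have ha : 0 < σs ^ 2 := by positivity
  have ht : 0 ≤ σt ^ 2 := sq_nonneg σt
  have hΦdiag : ∀ s, 0 < s ^ 2 →
      Φ (diagonal ν) s = diagonal fun i => ν i * s ^ 2 / (ν i + s ^ 2) := fun s hs => by
    rw [hΦ]
    exact diagonal_sub_mul_inv_add_smul_one_mul ν _ fun i => by linarith [hν i]
  rw [hΦdiag σs ha, hΦdiag _ (by rw [Real.sq_sqrt (by positivity)]; positivity),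
    Real.sq_sqrt (by positivity), diagonal_sub, ← diagonal_smul, diagonal_sub,
    posSemidef_diagonal_iff]
  intro i
  rw [Pi.smul_apply, smul_eq_mul]
  have hνi : ν i ≤ νmax := hνmax ▸ Finset.le_sup' ν (Finset.mem_univ i)
  have hm : σt ^ 2 * (νmax - τ * σs ^ 2) ≤ τ * σs ^ 2 * (νmax + σs ^ 2) :=
    (le_div_iff₀ (sub_pos.mpr hgt)).mp hbound
  exact tau_mul_sub_shrink_nonneg ha ht hτ.1.le (hν i) hνi hm

/-- Stop bound, matrix form for diagonal covariance: with
`Φ(S; s) := S − S(S + s²I)⁻¹S`, `Ss = diag ν` (all `νᵢ ≥ 0`), `σs > 0`, `τ ∈ (0,1)`,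
`σt ≥ 0`, `Σ₀ := Φ(Ss; σs)`, `Δ := Φ(Ss; √(σs²+σt²)) − Σ₀`: if `ν_max > τσs²` and
`σt² ≤ τσs²(ν_max+σs²)/(ν_max − τσs²)`, then `Δ ⪯ τΣ₀`. -/
theorem stmt_8 {n : ℕ} (hn : 0 < n) (ν : Fin n → ℝ) (hν : ∀ i, 0 ≤ ν i)
    (σs τ σt : ℝ) (hσs : 0 < σs) (hτ : τ ∈ Set.Ioo (0 : ℝ) 1) (hσt : 0 ≤ σt)
    (Φ : Matrix (Fin n) (Fin n) ℝ → ℝ → Matrix (Fin n) (Fin n) ℝ)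
    (hΦ : ∀ S s, Φ S s = S - S * (S + (s ^ 2) • (1 : Matrix (Fin n) (Fin n) ℝ))⁻¹ * S)
    (νmax : ℝ) (hνmax : νmax = Finset.univ.sup' (Finset.univ_nonempty_iff.mpr ⟨⟨0, hn⟩⟩) ν)
    (hgt : νmax > τ * σs ^ 2)
    (hbound : σt ^ 2 ≤ τ * σs ^ 2 * (νmax + σs ^ 2) / (νmax - τ * σs ^ 2)) :
    (τ • Φ (Matrix.diagonal ν) σs -
      (Φ (Matrix.diagonal ν) (Real.sqrt (σs ^ 2 + σt ^ 2)) -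
        Φ (Matrix.diagonal ν) σs)).PosSemidef :=
  stmt_8_general hn ν hν σs τ σt hσs hτ Φ hΦ νmax hνmax hgt hbound
end

section
/- (Common descent, obtuse case) Let u, v ∈ ℝⁿ be nonzero, set r := ‖u‖/‖v‖ and cos θ := ⟨u, v⟩/(‖u‖‖v‖), and assume cos θ < 0 (with cos θ > −1 not required). Let λ > 0 and d := u + λv. Then ⟨u, d⟩ > 0 and ⟨v, d⟩ > 0 if and only if λ ∈ ( r·(−cos θ), r·(−1/cos θ) ). -/
/-! Expanding the inner products gives `⟪u, u + λv⟫ = ‖u‖² + λ⟪u, v⟫` and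
`⟪v, u + λv⟫ = ⟪u, v⟫ + λ‖v‖²`. Since `⟪u, v⟫ < 0`, the first is positive exactly when
`λ < ‖u‖² / (-⟪u, v⟫) = r · (-1 / cos θ)`, and the second exactly when
`λ > -⟪u, v⟫ / ‖v‖² = r · (-cos θ)`. -/

open RealInnerProductSpace

section

variable {E : Type*} [NormedAddCommGroup E] [InnerProductSpace ℝ E] {u v : E}

theorem inner_self_add_smul_pos_iff (huv : ⟪u, v⟫ < 0) (t : ℝ) :
    0 < ⟪u, u + t • v⟫ ↔ t < ‖u‖ ^ 2 / -⟪u, v⟫ := by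
  rw [inner_add_right, real_inner_smul_right, real_inner_self_eq_norm_sq,
    lt_div_iff₀ (neg_pos.2 huv)]
  constructor <;> intro h <;> linarith

theorem inner_add_smul_self_pos_iff (huv : ⟪u, v⟫ < 0) (t : ℝ) :
    0 < ⟪v, u + t • v⟫ ↔ -⟪u, v⟫ / ‖v‖ ^ 2 < t := by
  have hv : v ≠ 0 := by rintro rfl; simp at huv
  rw [inner_add_right, real_inner_comm, real_inner_smul_right, real_inner_self_eq_norm_sq,
    div_lt_iff₀ (by positivity)]
  constructor <;> intro h <;> linarith

end

theorem stmt_13_general {n : ℕ} (u v : EuclideanSpace ℝ (Fin n))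
    (r c : ℝ) (hr : r = ‖u‖ / ‖v‖) (hc : c = (inner ℝ u v : ℝ) / (‖u‖ * ‖v‖))
    (hcneg : c < 0) (lam : ℝ) :
    (0 < (inner ℝ u (u + lam • v) : ℝ) ∧ 0 < (inner ℝ v (u + lam • v) : ℝ))
      ↔ lam ∈ Set.Ioo (r * (-c)) (r * (-1 / c)) := by
  have huv : ⟪u, v⟫ < 0 := neg_of_div_neg_left (hc ▸ hcneg) (by positivity)
  have hu : ‖u‖ ≠ 0 := norm_ne_zero_iff.2 fun h => by simp [h] at huv
  have hv : ‖v‖ ≠ 0 := norm_ne_zero_iff.2 fun h => by simp [h] at huv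
  have lower : r * -c = -⟪u, v⟫ / ‖v‖ ^ 2 := by
    rw [hr, hc]; field_simp
  have upper : r * (-1 / c) = ‖u‖ ^ 2 / -⟪u, v⟫ := by
    rw [hr, hc]; field_simp [huv.ne]
  rw [inner_self_add_smul_pos_iff huv, inner_add_smul_self_pos_iff huv, lower, upper,
    Set.mem_Ioo, and_comm]

/-- Common descent, obtuse case: for nonzero `u, v` with
`r = ‖u‖/‖v‖`, `cos θ = ⟨u,v⟩/(‖u‖‖v‖) < 0` and `λ > 0`, `d := u + λv` satisfies
`⟨u,d⟩ > 0 ∧ ⟨v,d⟩ > 0` iff `λ ∈ (r·(−cos θ), r·(−1/cos θ))`. -/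
theorem stmt_13 {n : ℕ} (u v : EuclideanSpace ℝ (Fin n)) (hu : u ≠ 0) (hv : v ≠ 0)
    (r c : ℝ) (hr : r = ‖u‖ / ‖v‖) (hc : c = (inner ℝ u v : ℝ) / (‖u‖ * ‖v‖))
    (hcneg : c < 0) (lam : ℝ) (hlam : 0 < lam) :
    (0 < (inner ℝ u (u + lam • v) : ℝ) ∧ 0 < (inner ℝ v (u + lam • v) : ℝ))
      ↔ lam ∈ Set.Ioo (r * (-c)) (r * (-1 / c)) :=
  stmt_13_general u v r c hr hc hcneg lam
end

section
/- (Common descent under two-sided normalization) Let u, v ∈ ℝⁿ be nonzero, cos θ := ⟨u,v⟩/(‖u‖‖v‖), r := ‖u‖/‖v‖, and λ := λ̂·r for some λ̂ > 0. Assume cos θ < 0. Then d := u + λv satisfies ⟨u,d⟩ > 0 and ⟨v,d⟩ > 0 if and only if λ̂ ∈ (−cos θ, −1/cos θ). -/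
/-!
Writing `c` for the cosine of the angle between `u` and `v`, the normalization `λ = λ̂ ‖u‖/‖v‖`
gives `⟪u, d⟫ = ‖u‖² (1 + λ̂ c)` and `⟪v, d⟫ = ‖u‖ ‖v‖ (λ̂ + c)`. For nonzero `u, v` the norm
factors are positive, so common descent means `1 + λ̂ c > 0` and `λ̂ + c > 0`; as `c < 0`, these
say `λ̂ < -1/c` and `λ̂ > -c`.
-/

open RealInnerProductSpace

section Normalized

variable {E : Type*} [NormedAddCommGroup E] [InnerProductSpace ℝ E]

theorem inner_add_normalized_smul_left (u v : E) (t : ℝ) :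
    ⟪u, u + (t * (‖u‖ / ‖v‖)) • v⟫ = ‖u‖ ^ 2 * (1 + t * (⟪u, v⟫ / (‖u‖ * ‖v‖))) := by
  rcases eq_or_ne u 0 with rfl | hu
  · simp
  rcases eq_or_ne v 0 with rfl | hv
  · simp
  have hu' : ‖u‖ ≠ 0 := norm_ne_zero_iff.mpr hu
  have hv' : ‖v‖ ≠ 0 := norm_ne_zero_iff.mpr hv
  rw [inner_add_right, real_inner_smul_right, real_inner_self_eq_norm_sq]
  field_simp

theorem inner_add_normalized_smul_right (u v : E) (t : ℝ) :
    ⟪v, u + (t * (‖u‖ / ‖v‖)) • v⟫ = ‖u‖ * ‖v‖ * (t + ⟪u, v⟫ / (‖u‖ * ‖v‖)) := by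
  rcases eq_or_ne u 0 with rfl | hu
  · simp
  rcases eq_or_ne v 0 with rfl | hv
  · simp
  have hu' : ‖u‖ ≠ 0 := norm_ne_zero_iff.mpr hu
  have hv' : ‖v‖ ≠ 0 := norm_ne_zero_iff.mpr hv
  rw [inner_add_right, real_inner_smul_right, real_inner_self_eq_norm_sq, real_inner_comm]
  field_simp
  ring

end Normalized

theorem pos_and_pos_iff_mem_Ioo_of_neg {c t : ℝ} (hc : c < 0) :
    (0 < 1 + t * c ∧ 0 < t + c) ↔ t ∈ Set.Ioo (-c) (-1 / c) := by
  rw [Set.mem_Ioo, lt_div_iff_of_neg hc]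
  constructor <;> rintro ⟨h₁, h₂⟩ <;> constructor <;> linarith

theorem stmt_14_general {n : ℕ} (u v : EuclideanSpace ℝ (Fin n)) (hu : u ≠ 0) (hv : v ≠ 0)
    (r c : ℝ) (hr : r = ‖u‖ / ‖v‖) (hc : c = (inner ℝ u v : ℝ) / (‖u‖ * ‖v‖))
    (hcneg : c < 0) (lamhat lam : ℝ) (hlam : lam = lamhat * r) :
    (0 < (inner ℝ u (u + lam • v) : ℝ) ∧ 0 < (inner ℝ v (u + lam • v) : ℝ))
      ↔ lamhat ∈ Set.Ioo (-c) (-1 / c) := by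
  have hnu : 0 < ‖u‖ := norm_pos_iff.mpr hu
  have hnv : 0 < ‖v‖ := norm_pos_iff.mpr hv
  subst hlam hr
  rw [inner_add_normalized_smul_left, inner_add_normalized_smul_right, ← hc,
    mul_pos_iff_of_pos_left (by positivity), mul_pos_iff_of_pos_left (by positivity)]
  exact pos_and_pos_iff_mem_Ioo_of_neg hcneg

/-- Common descent under two-sided normalization: for nonzero `u, v`
with `cos θ = ⟨u,v⟩/(‖u‖‖v‖) < 0`, `r = ‖u‖/‖v‖` and `λ = λ̂·r` for `λ̂ > 0`,
`d := u + λv` satisfies `⟨u,d⟩ > 0 ∧ ⟨v,d⟩ > 0` iff `λ̂ ∈ (−cos θ, −1/cos θ)`. -/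
theorem stmt_14 {n : ℕ} (u v : EuclideanSpace ℝ (Fin n)) (hu : u ≠ 0) (hv : v ≠ 0)
    (r c : ℝ) (hr : r = ‖u‖ / ‖v‖) (hc : c = (inner ℝ u v : ℝ) / (‖u‖ * ‖v‖))
    (hcneg : c < 0) (lamhat lam : ℝ) (hlamhat : 0 < lamhat) (hlam : lam = lamhat * r) :
    (0 < (inner ℝ u (u + lam • v) : ℝ) ∧ 0 < (inner ℝ v (u + lam • v) : ℝ))
      ↔ lamhat ∈ Set.Ioo (-c) (-1 / c) :=
  stmt_14_general u v hu hv r c hr hc hcneg lamhat lam hlam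
end
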